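/- arXiv:1106.4724 — 2 statements merged into one kernel-verified Lean document; each statement's English description precedes it below -/
import Mathlib

section
/- Let h ∈ L¹(ℝⁿ) be such that ĥ is (ℓ+1)-times continuously differentiable away from 0, continuous on ℝⁿ, and ĥ(ξ) = O(|ξ|^{ℓ+1}) as ξ → 0. Let m be a bounded function, smooth away from 0 and homogeneous of degree 0 (e.g., m_j(ξ) = -i ξ_j/|ξ|). If x^α h(x) ∈ L¹ for all |α| ≤ s where s ≤ ℓ, and the inverse transform g of m ĥ satisfies x^α g ∈ L¹ for all |α| ≤ s, then ∫ g(x) x^α dx = 0 for all multi-indices |α| ≤ s. -/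
open MeasureTheory Metric Finset Filter Asymptotics
open scoped FourierTransform Real Topology

private lemma norm_exp_I_sub_one (u : ℝ) : ‖Complex.exp (u * Complex.I) - 1‖ ≤ |u| := by
  have h1 : Complex.exp (u * Complex.I) - 1
      = Complex.ofReal (Real.cos u - 1) + Complex.ofReal (Real.sin u) * Complex.I := by
    rw [Complex.exp_mul_I]
    push_cast
    ring
  rw [h1, Complex.norm_add_mul_I]
  have h2 : Real.sin (u / 2) ^ 2 ≤ (u / 2) ^ 2 := by
    have h := Real.abs_sin_le_abs (x := u / 2)
    nlinarith [abs_nonneg (Real.sin (u / 2)), sq_abs (Real.sin (u / 2)), sq_abs (u / 2)]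
  have h3 : Real.sin (u / 2) ^ 2 = 1 / 2 - Real.cos u / 2 := by
    have h4 : (2:ℝ) * (u / 2) = u := by ring
    have := Real.sin_sq_eq_half_sub (u / 2)
    rw [h4] at this
    exact this
  have hle : (Real.cos u - 1) ^ 2 + Real.sin u ^ 2 ≤ u ^ 2 := by
    nlinarith [Real.sin_sq_add_cos_sq u]
  calc Real.sqrt ((Real.cos u - 1) ^ 2 + Real.sin u ^ 2) ≤ Real.sqrt (u ^ 2) :=
        Real.sqrt_le_sqrt hle
    _ = |u| := Real.sqrt_sq_eq_abs u

private lemma norm_fourierChar_sub_one_le (r : ℝ) :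
    ‖(Real.fourierChar r : ℂ) - 1‖ ≤ 2 * π * |r| := by
  rw [Real.fourierChar_apply]
  calc ‖Complex.exp ((2 * π * r : ℝ) * Complex.I) - 1‖ ≤ |2 * π * r| :=
        norm_exp_I_sub_one _
    _ = 2 * π * |r| := by
        rw [abs_mul, abs_of_nonneg (by positivity : (0:ℝ) ≤ 2 * π)]

private lemma tendsto_quot (c : ℝ) :
    Filter.Tendsto (fun t : ℝ => ((Real.fourierChar (-(t * c)) : ℂ) - 1) / (t : ℂ))
      (𝓝[≠] (0:ℝ)) (𝓝 (-(2 * π * Complex.I) * c)) := by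
  have hinner : HasDerivAt (fun t : ℝ => -(t * c)) (-c) 0 := by
    exact (hasDerivAt_mul_const (x := (0:ℝ)) c).neg
  have houter := Real.hasDerivAt_fourierChar (-(0 * c))
  have hcomp : HasDerivAt (fun t : ℝ => (Real.fourierChar (-(t * c)) : ℂ))
      (-(2 * π * Complex.I) * c) 0 := by
    have h := houter.scomp (0:ℝ) hinner
    convert h using 1
    all_goals try rfl
    simp
    ring
  have := hasDerivAt_iff_tendsto_slope.mp hcomp
  apply this.congr
  intro t
  rw [slope_def_module]
  simp only [sub_zero, zero_mul, neg_zero]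
  rw [AddChar.map_zero_eq_one]
  push_cast
  rw [Complex.real_smul]
  push_cast
  ring

theorem multiplier_moments_vanish (n : ℕ) (ℓ s : ℕ) (hs : s ≤ ℓ)
    (h : EuclideanSpace ℝ (Fin n) → ℂ) (hint : Integrable h volume)
    (hmom : ∀ α : Fin n → ℕ, (∑ i, α i) ≤ s →
      Integrable (fun x => (∏ i, (x i) ^ (α i) : ℝ) • h x) volume)
    (hsmooth : ContDiffOn ℝ (ℓ + 1 : ℕ) (𝓕 h) {0}ᶜ)
    (hcont : Continuous (𝓕 h))
    (hO : (𝓕 h) =O[nhds (0 : EuclideanSpace ℝ (Fin n))] fun ξ => ‖ξ‖ ^ (ℓ + 1))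
    (m : EuclideanSpace ℝ (Fin n) → ℂ)
    (hmbdd : ∃ Cm : ℝ, ∀ ξ, ‖m ξ‖ ≤ Cm)
    (hmsmooth : ContDiffOn ℝ (⊤ : ℕ∞) m {0}ᶜ)
    (hmhom : ∀ c : ℝ, 0 < c → ∀ ξ, m (c • ξ) = m ξ)
    (g : EuclideanSpace ℝ (Fin n) → ℂ)
    (hgmom : ∀ α : Fin n → ℕ, (∑ i, α i) ≤ s →
      Integrable (fun x => (∏ i, (x i) ^ (α i) : ℝ) • g x) volume)
    (hgh : ∀ ξ, 𝓕 g ξ = m ξ * 𝓕 h ξ) :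
    ∀ α : Fin n → ℕ, (∑ i, α i) ≤ s →
      ∫ x, (∏ i, (x i) ^ (α i) : ℝ) • g x = 0 := by
  intro α hα
  classical
  obtain ⟨Cm, hCm⟩ := hmbdd
  have hg0 : Integrable g volume := by
    simpa using hgmom (fun _ => 0) (by simp)
  have hgα := hgmom α hα
  set N : ℕ := ∑ i, α i with hN
  have hNs : N ≤ s := hα
  -- Big-O bound for 𝓕 g near 0
  have hFg : (𝓕 g) =O[𝓝 (0 : EuclideanSpace ℝ (Fin n))] fun ξ => ‖ξ‖ ^ (ℓ + 1) := by
    refine (Asymptotics.IsBigO.of_bound Cm ?_).trans hO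
    filter_upwards with ξ
    rw [hgh ξ, norm_mul]
    exact mul_le_mul_of_nonneg_right (hCm ξ) (norm_nonneg _)
  set S := Fintype.piFinset fun i : Fin n => Finset.range (α i + 1) with hS
  set c : (Fin n → ℕ) → ℂ :=
    fun β => ∏ i, (-1 : ℂ) ^ (α i - β i) * ((α i).choose (β i) : ℂ) with hc
  set v : (Fin n → ℕ) → EuclideanSpace ℝ (Fin n) := fun β => WithLp.toLp 2 (fun i => (β i : ℝ)) with hv
  have hinner : ∀ (β : Fin n → ℕ) (t : ℝ) (x : EuclideanSpace ℝ (Fin n)),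
      (inner ℝ x (t • v β) : ℝ) = ∑ i, x i * (t * β i) := by
    intro β t x
    rw [PiLp.inner_apply]
    refine Finset.sum_congr rfl fun i _ => ?_
    simp [hv, RCLike.inner_apply, PiLp.smul_apply, smul_eq_mul]
    ring
  -- pointwise expansion of the product of differences
  have expand : ∀ (t : ℝ) (x : EuclideanSpace ℝ (Fin n)),
      (∏ i, ((Real.fourierChar (-(t * x i)) : ℂ) - 1) ^ (α i))
        = ∑ β ∈ S, c β * (Real.fourierChar (-(inner ℝ x (t • v β) : ℝ)) : ℂ) := by
    intro t x
    have hterm : ∀ i : Fin n, ((Real.fourierChar (-(t * x i)) : ℂ) - 1) ^ (α i)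
        = ∑ k ∈ Finset.range (α i + 1),
            ((-1 : ℂ) ^ (α i - k) * ((α i).choose k : ℂ)) *
              (Real.fourierChar (-(t * x i)) : ℂ) ^ k := by
      intro i
      rw [sub_eq_add_neg, add_pow]
      refine Finset.sum_congr rfl fun k _ => ?_
      rw [neg_pow]
      ring
    calc (∏ i, ((Real.fourierChar (-(t * x i)) : ℂ) - 1) ^ (α i))
        = ∏ i, ∑ k ∈ Finset.range (α i + 1),
            ((-1 : ℂ) ^ (α i - k) * ((α i).choose k : ℂ)) *
              (Real.fourierChar (-(t * x i)) : ℂ) ^ k :=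
          Finset.prod_congr rfl fun i _ => hterm i
      _ = ∑ β ∈ S, ∏ i, ((-1 : ℂ) ^ (α i - β i) * ((α i).choose (β i) : ℂ)) *
            (Real.fourierChar (-(t * x i)) : ℂ) ^ (β i) := Finset.prod_univ_sum _ _
      _ = ∑ β ∈ S, c β * (Real.fourierChar (-(inner ℝ x (t • v β) : ℝ)) : ℂ) := by
          refine Finset.sum_congr rfl fun β _ => ?_
          rw [Finset.prod_mul_distrib]
          congr 1
          simp_rw [Real.fourierChar_apply, ← Complex.exp_nat_mul, ← Complex.exp_sum]
          congr 1
          rw [hinner β t x]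
          have hB : (2 * π * -(∑ i, x i * (t * (β i : ℝ))))
              = ∑ i, (β i : ℝ) * (2 * π * -(t * x i)) := by
            rw [mul_neg, Finset.mul_sum, ← Finset.sum_neg_distrib]
            exact Finset.sum_congr rfl fun i _ => by ring
          rw [hB, Complex.ofReal_sum, Finset.sum_mul]
          exact Finset.sum_congr rfl fun i _ => by push_cast; ring
  -- the key finite-difference identity
  have key : ∀ t : ℝ,
      (∫ x, (∏ i, ((Real.fourierChar (-(t * x i)) : ℂ) - 1) ^ (α i)) * g x)
        = ∑ β ∈ S, c β * 𝓕 g (t • v β) := by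
    intro t
    have hig : ∀ β : Fin n → ℕ, Integrable
        (fun x : EuclideanSpace ℝ (Fin n) =>
          c β * ((Real.fourierChar (-(inner ℝ x (t • v β) : ℝ)) : ℂ) * g x)) volume := by
      intro β
      apply Integrable.const_mul
      have := (Real.fourierIntegral_convergent_iff (f := g) (t • v β)).2 hg0
      simpa [Circle.smul_def] using this
    calc (∫ x, (∏ i, ((Real.fourierChar (-(t * x i)) : ℂ) - 1) ^ (α i)) * g x)
        = ∫ x, ∑ β ∈ S,
            c β * ((Real.fourierChar (-(inner ℝ x (t • v β) : ℝ)) : ℂ) * g x) := by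
          congr 1
          funext x
          rw [expand t x, Finset.sum_mul]
          simp only [mul_assoc]
      _ = ∑ β ∈ S, ∫ x,
            c β * ((Real.fourierChar (-(inner ℝ x (t • v β) : ℝ)) : ℂ) * g x) :=
          integral_finset_sum S fun β _ => hig β
      _ = ∑ β ∈ S, c β * 𝓕 g (t • v β) := by
          refine Finset.sum_congr rfl fun β _ => ?_
          rw [integral_const_mul]
          congr 1
  -- integrable bound for dominated convergence
  have h2 : Integrable
      (fun x : EuclideanSpace ℝ (Fin n) => (∏ i, |x i| ^ (α i)) * ‖g x‖) volume := by
    refine hgα.norm.congr ?_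
    filter_upwards with x
    simp [norm_smul, abs_prod, abs_pow, Real.norm_eq_abs]
  have hbound_int : Integrable
      (fun x : EuclideanSpace ℝ (Fin n) => (∏ i, (2 * π * |x i|) ^ (α i)) * ‖g x‖) volume := by
    have heq : (fun x : EuclideanSpace ℝ (Fin n) => (∏ i, (2 * π * |x i|) ^ (α i)) * ‖g x‖)
        = fun x => (2 * π) ^ N * ((∏ i, |x i| ^ (α i)) * ‖g x‖) := by
      funext x
      simp only [mul_pow, Finset.prod_mul_distrib, Finset.prod_pow_eq_pow_sum, ← hN]
      ring
    rw [heq]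
    exact h2.const_mul _
  -- first limit : dominated convergence
  have hlim1 : Filter.Tendsto
      (fun t : ℝ => ∫ x, (∏ i, (((Real.fourierChar (-(t * x i)) : ℂ) - 1) / (t:ℂ)) ^ (α i)) * g x)
      (𝓝[≠] (0:ℝ))
      (𝓝 (∫ x, (∏ i, (-(2 * (π:ℂ) * Complex.I) * (x i : ℂ)) ^ (α i)) * g x)) := by
    apply MeasureTheory.tendsto_integral_filter_of_dominated_convergence
      (bound := fun x : EuclideanSpace ℝ (Fin n) => (∏ i, (2 * π * |x i|) ^ (α i)) * ‖g x‖)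
    · filter_upwards with t
      refine AEStronglyMeasurable.mul ?_ hg0.1
      refine Continuous.aestronglyMeasurable ?_
      refine continuous_finset_prod _ fun i _ => ?_
      refine Continuous.pow ?_ _
      refine Continuous.div_const ?_ _
      refine Continuous.sub ?_ continuous_const
      refine Continuous.subtype_val ?_
      exact Real.continuous_fourierChar.comp
        ((continuous_const.mul ((PiLp.continuous_apply 2 _ i))).neg)
    · filter_upwards [self_mem_nhdsWithin] with t ht
      have ht' : t ≠ 0 := ht
      filter_upwards with x
      rw [norm_mul]
      have hfac : ∀ i : Fin n,
          ‖((Real.fourierChar (-(t * x i)) : ℂ) - 1) / (t:ℂ)‖ ≤ 2 * π * |x i| := by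
        intro i
        have h2 := norm_fourierChar_sub_one_le (-(t * x i))
        rw [abs_neg, abs_mul] at h2
        rw [norm_div, Complex.norm_real, Real.norm_eq_abs,
          div_le_iff₀ (abs_pos.mpr ht')]
        calc ‖(Real.fourierChar (-(t * x i)) : ℂ) - 1‖ ≤ 2 * π * (|t| * |x i|) := h2
          _ = 2 * π * |x i| * |t| := by ring
      have hP : ‖∏ i, (((Real.fourierChar (-(t * x i)) : ℂ) - 1) / (t:ℂ)) ^ (α i)‖
          ≤ ∏ i, (2 * π * |x i|) ^ (α i) := by
        rw [norm_prod]
        refine Finset.prod_le_prod (fun i _ => norm_nonneg _) fun i _ => ?_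
        rw [norm_pow]
        exact pow_le_pow_left₀ (norm_nonneg _) (hfac i) _
      exact mul_le_mul_of_nonneg_right hP (norm_nonneg _)
    · exact hbound_int
    · filter_upwards with x
      refine Filter.Tendsto.mul_const _ ?_
      refine tendsto_finset_prod _ fun i _ => ?_
      exact (tendsto_quot (x i)).pow (α i)
  -- rewrite the limit value
  have htarget : (∫ x, (∏ i, (-(2 * (π:ℂ) * Complex.I) * (x i : ℂ)) ^ (α i)) * g x)
      = (-(2 * (π:ℂ) * Complex.I)) ^ N * ∫ x, (∏ i, (x i) ^ (α i) : ℝ) • g x := by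
    rw [← integral_const_mul]
    congr 1
    funext x
    simp only [mul_pow, Finset.prod_mul_distrib, Finset.prod_pow_eq_pow_sum, ← hN]
    rw [Complex.real_smul]
    push_cast
    ring
  -- second limit : vanishing via the big-O bound
  have hlim2 : Filter.Tendsto
      (fun t : ℝ => ∫ x, (∏ i, (((Real.fourierChar (-(t * x i)) : ℂ) - 1) / (t:ℂ)) ^ (α i)) * g x)
      (𝓝[≠] (0:ℝ)) (𝓝 0) := by
    have hrw : ∀ t : ℝ,
        (∫ x, (∏ i, (((Real.fourierChar (-(t * x i)) : ℂ) - 1) / (t:ℂ)) ^ (α i)) * g x)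
          = ∑ β ∈ S, ((t:ℂ))⁻¹ ^ N * (c β * 𝓕 g (t • v β)) := by
      intro t
      rw [← Finset.mul_sum, ← key t, ← integral_const_mul]
      congr 1
      funext x
      rw [← mul_assoc]
      congr 1
      calc ∏ i, (((Real.fourierChar (-(t * x i)) : ℂ) - 1) / (t:ℂ)) ^ (α i)
          = ∏ i, (((Real.fourierChar (-(t * x i)) : ℂ) - 1) ^ (α i) * ((t:ℂ)⁻¹) ^ (α i)) := by
            refine Finset.prod_congr rfl fun i _ => ?_
            rw [div_eq_mul_inv, mul_pow]
        _ = ((t:ℂ))⁻¹ ^ N * ∏ i, ((Real.fourierChar (-(t * x i)) : ℂ) - 1) ^ (α i) := by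
            rw [Finset.prod_mul_distrib, Finset.prod_pow_eq_pow_sum, ← hN, mul_comm]
    simp only [hrw]
    have h0 : (0:ℂ) = ∑ β ∈ S, 0 := by simp
    rw [h0]
    refine tendsto_finset_sum _ fun β _ => ?_
    obtain ⟨K, hK⟩ := hFg.bound
    have htend : Filter.Tendsto (fun t : ℝ => t • v β) (𝓝[≠] (0:ℝ))
        (𝓝 (0 : EuclideanSpace ℝ (Fin n))) := by
      have h1 : Filter.Tendsto (fun t : ℝ => t • v β) (𝓝 (0:ℝ)) (𝓝 ((0:ℝ) • v β)) :=
        tendsto_id.smul_const (v β)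
      rw [zero_smul] at h1
      exact h1.mono_left nhdsWithin_le_nhds
    have hev := htend.eventually hK
    have hpos : 1 ≤ ℓ + 1 - N := by omega
    refine squeeze_zero_norm'
      (a := fun t : ℝ => ‖c β‖ * K * ‖v β‖ ^ (ℓ + 1) * |t| ^ (ℓ + 1 - N)) ?_ ?_
    · filter_upwards [hev, self_mem_nhdsWithin] with t hb ht
      have ht' : t ≠ 0 := ht
      have habs : |t| ≠ 0 := abs_ne_zero.mpr ht'
      calc ‖(t:ℂ)⁻¹ ^ N * (c β * 𝓕 g (t • v β))‖
          = |t|⁻¹ ^ N * (‖c β‖ * ‖𝓕 g (t • v β)‖) := by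
            rw [norm_mul, norm_mul, norm_pow, norm_inv, Complex.norm_real, Real.norm_eq_abs]
        _ ≤ |t|⁻¹ ^ N * (‖c β‖ * (K * ‖t • v β‖ ^ (ℓ + 1))) := by
            rw [Real.norm_eq_abs, abs_of_nonneg (by positivity)] at hb
            gcongr
        _ = ‖c β‖ * K * ‖v β‖ ^ (ℓ + 1) * |t| ^ (ℓ + 1 - N) := by
            rw [norm_smul, Real.norm_eq_abs, mul_pow,
              show ℓ + 1 = N + (ℓ + 1 - N) by omega, pow_add]
            field_simp
            rw [show N + (ℓ + 1 - N) - N = ℓ + 1 - N by omega, one_div, inv_pow]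
            field_simp
    · have h1 : Filter.Tendsto (fun t : ℝ => |t| ^ (ℓ + 1 - N)) (𝓝 (0:ℝ)) (𝓝 0) := by
        have hc : Continuous fun t : ℝ => |t| ^ (ℓ + 1 - N) :=
          (continuous_abs).pow _
        have := hc.tendsto 0
        simpa [zero_pow (by omega : ℓ + 1 - N ≠ 0)] using this
      simpa using ((h1.mono_left nhdsWithin_le_nhds).const_mul (‖c β‖ * K * ‖v β‖ ^ (ℓ + 1)))
  have hmain := tendsto_nhds_unique hlim1 hlim2
  rw [htarget] at hmain
  have hne : (-(2 * (π:ℂ) * Complex.I)) ^ N ≠ 0 := by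
    apply pow_ne_zero
    simp [Real.pi_ne_zero, Complex.I_ne_zero]
  exact (mul_eq_zero.mp hmain).resolve_left hne
end

section
/- Let 0 < p ≤ 1, w ∈ A_∞, q = 2(q_w + 1) where q_w is the critical A_p index of w, and ℓ ≥ s ≥ [n(q_w/p - 1)]. Then every w-(p,q,ℓ)-atom f is a constant multiple of a classical (unweighted) (p,2,ℓ)-atom; specifically, g := C^{-1/q} |B|^{-1/p} w(B)^{1/p} f is a classical (p,2,ℓ)-atom, where C is the constant in the A_{q/2} characterization of w. -/
open MeasureTheory Metric Finset

noncomputable def setAvg {n : ℕ} (w : EuclideanSpace ℝ (Fin n) → ℝ)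
    (B : Set (EuclideanSpace ℝ (Fin n))) : ℝ :=
  (volume B).toReal⁻¹ * ∫ x in B, w x

def IsAp (n : ℕ) (w : EuclideanSpace ℝ (Fin n) → ℝ) (p C : ℝ) : Prop :=
  (p = 1 → ∀ (x₀ : EuclideanSpace ℝ (Fin n)) (r : ℝ), 0 < r →
    setAvg w (ball x₀ r) ≤ C * essInf w (volume.restrict (ball x₀ r))) ∧
  (1 < p → ∀ (x₀ : EuclideanSpace ℝ (Fin n)) (r : ℝ), 0 < r →
    setAvg w (ball x₀ r) *
      (setAvg (fun x => w x ^ (-1 / (p - 1))) (ball x₀ r)) ^ (p - 1) ≤ C)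

/-- A `w`-`(p,q,ℓ)`-atom supported in the ball `B(x₀,σ)`. -/
def IsWAtom (n : ℕ) (w : EuclideanSpace ℝ (Fin n) → ℝ) (p q : ℝ) (ℓ : ℕ)
    (f : EuclideanSpace ℝ (Fin n) → ℝ) (x₀ : EuclideanSpace ℝ (Fin n)) (σ : ℝ) : Prop :=
  0 < σ ∧ (∀ x ∉ ball x₀ σ, f x = 0) ∧
  Integrable (fun x => |f x| ^ q * w x) volume ∧
  (∫ x, |f x| ^ q * w x) ^ (1 / q) ≤ (∫ x in ball x₀ σ, w x) ^ (1 / q - 1 / p) ∧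
  (∀ α : Fin n → ℕ, (∑ i, α i) ≤ ℓ →
    Integrable (fun x => f x * ∏ i, (x i) ^ (α i)) volume ∧
    ∫ x, f x * ∏ i, (x i) ^ (α i) = 0)

/-- A classical (unweighted) `(p,2,ℓ)`-atom supported in the ball `B(x₀,σ)`. -/
def IsClassicalAtom2 (n : ℕ) (p : ℝ) (ℓ : ℕ)
    (g : EuclideanSpace ℝ (Fin n) → ℝ) (x₀ : EuclideanSpace ℝ (Fin n)) (σ : ℝ) : Prop :=
  0 < σ ∧ (∀ x ∉ ball x₀ σ, g x = 0) ∧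
  MemLp g 2 volume ∧
  (∫ x, |g x| ^ (2:ℝ)) ^ ((1:ℝ) / 2) ≤ (volume (ball x₀ σ)).toReal ^ (1 / 2 - 1 / p) ∧
  (∀ α : Fin n → ℕ, (∑ i, α i) ≤ ℓ →
    Integrable (fun x => g x * ∏ i, (x i) ^ (α i)) volume ∧
    ∫ x, g x * ∏ i, (x i) ^ (α i) = 0)

/-!
Applying the `A_{q/2}` characterization of `w` to `g = |f|²` on the supporting ball `B` gives
`‖f‖₂ ≤ C^{1/q} |B|^{1/2} w(B)^{-1/q} ‖f‖_{L^q_w} ≤ C^{1/q} |B|^{1/2} w(B)^{-1/p}`, which is the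
`(p,2)`-atom size condition for `C^{-1/q} |B|^{-1/p} w(B)^{1/p} f`; support and vanishing moments
survive scaling. As the averages of non-integrable test functions are junk, the characterization
is applied to the truncations `min (f², N)`, and the bound passes to `f²` by monotone convergence.
-/

theorem integrable_and_integral_le_of_integral_min_natCast_le {α : Type*} [MeasurableSpace α]
    {μ : Measure α} [IsFiniteMeasure μ] {g : α → ℝ} (hg : AEMeasurable g μ) (hg0 : ∀ x, 0 ≤ g x)
    {M : ℝ} (hM : ∀ N : ℕ, ∫ x, min (g x) N ∂μ ≤ M) :
    Integrable g μ ∧ ∫ x, g x ∂μ ≤ M := by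
  have hmin : ∀ N : ℕ, Integrable (fun x => min (g x) N) μ := fun N =>
    (integrable_const (N : ℝ)).mono' (hg.min aemeasurable_const).aestronglyMeasurable
      (ae_of_all _ fun x => by
        rw [Real.norm_of_nonneg (le_min (hg0 x) N.cast_nonneg)]
        exact min_le_right _ _)
  have hlin : ∫⁻ x, ENNReal.ofReal (g x) ∂μ ≤ ENNReal.ofReal M := by
    have hsup : ∀ x, ENNReal.ofReal (g x) = ⨆ N : ℕ, ENNReal.ofReal (min (g x) N) := fun x => by
      simp [← inf_iSup_eq, ENNReal.iSup_natCast]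
    simp_rw [hsup]
    rw [lintegral_iSup' (fun N => (hg.min aemeasurable_const).ennreal_ofReal)
      (ae_of_all _ fun x N N' hNN' => ENNReal.ofReal_le_ofReal
        (min_le_min_left _ (Nat.cast_le.2 hNN')))]
    refine iSup_le fun N => ?_
    rw [← ofReal_integral_eq_lintegral_ofReal (hmin N)
      (ae_of_all _ fun x => le_min (hg0 x) N.cast_nonneg)]
    exact ENNReal.ofReal_le_ofReal (hM N)
  have hM0 : 0 ≤ M := (integral_nonneg fun x => le_min (hg0 x) (Nat.cast_nonneg 0)).trans (hM 0)
  refine ⟨⟨hg.aestronglyMeasurable, ?_⟩, ?_⟩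
  · rw [hasFiniteIntegral_iff_ofReal (ae_of_all _ hg0)]
    exact hlin.trans_lt ENNReal.ofReal_lt_top
  · rw [integral_eq_lintegral_of_nonneg_ae (ae_of_all _ hg0) hg.aestronglyMeasurable]
    exact ENNReal.toReal_le_of_le_ofReal hM0 hlin

theorem sq_rpow_div_two (a q : ℝ) : (a ^ 2) ^ (q / 2) = |a| ^ q := by
  rw [← sq_abs, ← Real.rpow_natCast, ← Real.rpow_mul (abs_nonneg a)]
  congr 1
  ring

def ApCharacterization (n : ℕ) (w : EuclideanSpace ℝ (Fin n) → ℝ) (r C : ℝ) : Prop :=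
  ∀ g : EuclideanSpace ℝ (Fin n) → ℝ, Measurable g → (∀ x, 0 ≤ g x) →
    ∀ (y₀ : EuclideanSpace ℝ (Fin n)) (ρ : ℝ), 0 < ρ →
      (setAvg g (ball y₀ ρ)) ^ r ≤ C * (∫ x in ball y₀ ρ, w x)⁻¹ * ∫ x in ball y₀ ρ, g x ^ r * w x

def HasVanishingMoments (n ℓ : ℕ) (f : EuclideanSpace ℝ (Fin n) → ℝ) : Prop :=
  ∀ α : Fin n → ℕ, (∑ i, α i) ≤ ℓ →
    Integrable (fun x => f x * ∏ i, (x i) ^ (α i)) volume ∧ ∫ x, f x * ∏ i, (x i) ^ (α i) = 0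

theorem HasVanishingMoments.const_mul {n ℓ : ℕ} {f : EuclideanSpace ℝ (Fin n) → ℝ}
    (hf : HasVanishingMoments n ℓ f) (c : ℝ) : HasVanishingMoments n ℓ (fun x => c * f x) := by
  intro α hα
  obtain ⟨hint, hzero⟩ := hf α hα
  simp_rw [mul_assoc]
  exact ⟨hint.const_mul c, by rw [integral_const_mul, hzero, mul_zero]⟩

section Weighted

variable {n : ℕ} {w : EuclideanSpace ℝ (Fin n) → ℝ} {r q C σ : ℝ} {x₀ : EuclideanSpace ℝ (Fin n)}

theorem ApCharacterization.setIntegral_le (hchar : ApCharacterization n w r C) (hr : 0 < r)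
    {g : EuclideanSpace ℝ (Fin n) → ℝ} (hg : Measurable g) (hg0 : ∀ x, 0 ≤ g x) (hσ : 0 < σ) :
    ∫ x in ball x₀ σ, g x ≤ (volume (ball x₀ σ)).toReal *
      (C * (∫ x in ball x₀ σ, w x)⁻¹ * ∫ x in ball x₀ σ, g x ^ r * w x) ^ r⁻¹ := by
  have hV : 0 < (volume (ball x₀ σ)).toReal :=
    ENNReal.toReal_pos (measure_ball_pos volume x₀ hσ).ne' measure_ball_lt_top.ne
  have havg : 0 ≤ setAvg g (ball x₀ σ) := mul_nonneg (by positivity) (integral_nonneg hg0)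
  have hbound := hchar g hg hg0 x₀ σ hσ
  calc ∫ x in ball x₀ σ, g x = (volume (ball x₀ σ)).toReal * setAvg g (ball x₀ σ) := by
        rw [setAvg, mul_inv_cancel_left₀ hV.ne']
    _ ≤ _ := mul_le_mul_of_nonneg_left ((Real.le_rpow_inv_iff_of_pos havg
        ((Real.rpow_nonneg havg r).trans hbound) hr).2 hbound) hV.le

theorem ApCharacterization.integrableOn_sq_and_setIntegral_sq_le
    (hchar : ApCharacterization n w (q / 2) C) (hq : 0 < q) (hC : 0 ≤ C) (hw : ∀ x, 0 ≤ w x)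
    {f : EuclideanSpace ℝ (Fin n) → ℝ} (hf : AEMeasurable f volume)
    (hfw : Integrable (fun x => |f x| ^ q * w x) volume) (hσ : 0 < σ) :
    IntegrableOn (fun x => f x ^ 2) (ball x₀ σ) volume ∧
      ∫ x in ball x₀ σ, f x ^ 2 ≤ (volume (ball x₀ σ)).toReal *
        (C * (∫ x in ball x₀ σ, w x)⁻¹ * ∫ x in ball x₀ σ, |f x| ^ q * w x) ^ (q / 2)⁻¹ := by
  have : IsFiniteMeasure (volume.restrict (ball x₀ σ)) :=
    isFiniteMeasure_restrict.2 measure_ball_lt_top.ne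
  set φ := hf.mk f
  have hφ2 : Measurable fun x => φ x ^ 2 := hf.measurable_mk.pow_const 2
  have hCW : 0 ≤ C * (∫ x in ball x₀ σ, w x)⁻¹ :=
    mul_nonneg hC (inv_nonneg.2 (integral_nonneg hw))
  have htrunc : ∀ N : ℕ, ∫ x in ball x₀ σ, min (φ x ^ 2) N ≤ (volume (ball x₀ σ)).toReal *
      (C * (∫ x in ball x₀ σ, w x)⁻¹ * ∫ x in ball x₀ σ, |f x| ^ q * w x) ^ (q / 2)⁻¹ := by
    intro N
    have hN0 : ∀ x, 0 ≤ min (φ x ^ 2) N := fun x => le_min (sq_nonneg _) N.cast_nonneg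
    have hNw : ∀ x, 0 ≤ min (φ x ^ 2) N ^ (q / 2) * w x := fun x =>
      mul_nonneg (Real.rpow_nonneg (hN0 x) _) (hw x)
    refine (hchar.setIntegral_le (by positivity) (hφ2.min measurable_const) hN0 hσ).trans ?_
    gcongr _ * (_ * ?_) ^ _
    · exact mul_nonneg hCW (integral_nonneg hNw)
    refine integral_mono_of_nonneg (ae_of_all _ hNw) hfw.integrableOn ?_
    filter_upwards [ae_restrict_of_ae hf.ae_eq_mk] with x hx
    rw [hx, ← sq_rpow_div_two]
    exact mul_le_mul_of_nonneg_right
      (Real.rpow_le_rpow (hN0 x) (min_le_left _ _) (by positivity)) (hw x)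
  obtain ⟨hint, hle⟩ :=
    integrable_and_integral_le_of_integral_min_natCast_le hφ2.aemeasurable (fun x => sq_nonneg _)
      htrunc
  have hfφ : (fun x => f x ^ 2) =ᵐ[volume.restrict (ball x₀ σ)] fun x => φ x ^ 2 :=
    ae_restrict_of_ae (hf.ae_eq_mk.fun_comp (· ^ 2))
  exact ⟨hint.congr hfφ.symm, (integral_congr_ae hfφ).trans_le hle⟩

theorem ApCharacterization.integrable_sq_and_integral_sq_rpow_le
    (hchar : ApCharacterization n w (q / 2) C) (hq : 0 < q) (hC : 0 ≤ C) (hw : ∀ x, 0 ≤ w x)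
    {f : EuclideanSpace ℝ (Fin n) → ℝ} (hf : AEMeasurable f volume)
    (hfw : Integrable (fun x => |f x| ^ q * w x) volume) (hσ : 0 < σ)
    (hsupp : ∀ x ∉ ball x₀ σ, f x = 0) :
    Integrable (fun x => f x ^ 2) volume ∧
      (∫ x, f x ^ 2) ^ (1 / 2 : ℝ) ≤ (volume (ball x₀ σ)).toReal ^ (1 / 2 : ℝ) * C ^ (1 / q) *
        (∫ x in ball x₀ σ, w x) ^ (-(1 / q)) * (∫ x, |f x| ^ q * w x) ^ (1 / q) := by
  obtain ⟨hint, hle⟩ := hchar.integrableOn_sq_and_setIntegral_sq_le hq hC hw hf hfw hσ (x₀ := x₀)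
  have hsupp2 : ∀ x ∉ ball x₀ σ, f x ^ 2 = 0 := fun x hx => by rw [hsupp x hx, sq, mul_zero]
  refine ⟨(integrableOn_iff_integrable_of_support_subset
    (Function.support_subset_iff'.2 hsupp2)).1 hint, ?_⟩
  set V := (volume (ball x₀ σ)).toReal
  set W := ∫ x in ball x₀ σ, w x
  set I := ∫ x, |f x| ^ q * w x
  have hW : 0 ≤ W := integral_nonneg hw
  have hfw0 : ∀ x, 0 ≤ |f x| ^ q * w x := fun x => mul_nonneg (by positivity) (hw x)
  have hI : 0 ≤ I := integral_nonneg hfw0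
  have hX : 0 ≤ C * W⁻¹ * I := by positivity
  calc (∫ x, f x ^ 2) ^ (1 / 2 : ℝ) = (∫ x in ball x₀ σ, f x ^ 2) ^ (1 / 2 : ℝ) := by
        rw [setIntegral_eq_integral_of_forall_compl_eq_zero hsupp2]
    _ ≤ (V * (C * W⁻¹ * I) ^ (q / 2)⁻¹) ^ (1 / 2 : ℝ) := by
        gcongr
        refine hle.trans ?_
        gcongr _ * (_ * ?_) ^ _
        · exact mul_nonneg (mul_nonneg hC (inv_nonneg.2 hW)) (integral_nonneg hfw0)
        · exact setIntegral_le_integral hfw (ae_of_all _ hfw0)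
    _ = V ^ (1 / 2 : ℝ) * C ^ (1 / q) * W ^ (-(1 / q)) * I ^ (1 / q) := by
        have hexp : (q / 2)⁻¹ * (1 / 2) = 1 / q := by field_simp
        rw [Real.mul_rpow ENNReal.toReal_nonneg (Real.rpow_nonneg hX _), ← Real.rpow_mul hX, hexp,
          Real.mul_rpow (by positivity) hI, Real.mul_rpow hC (inv_nonneg.2 hW),
          Real.inv_rpow hW, ← Real.rpow_neg hW]
        ring

end Weighted

theorem isClassicalAtom2_of_integral_sq_le {n ℓ : ℕ} {p σ : ℝ} {x₀ : EuclideanSpace ℝ (Fin n)}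
    {g : EuclideanSpace ℝ (Fin n) → ℝ} (hσ : 0 < σ) (hsupp : ∀ x ∉ ball x₀ σ, g x = 0)
    (hg : AEStronglyMeasurable g volume) (hg2 : Integrable (fun x => g x ^ 2) volume)
    (hnorm : (∫ x, g x ^ 2) ^ (1 / 2 : ℝ) ≤ (volume (ball x₀ σ)).toReal ^ (1 / 2 - 1 / p))
    (hmom : HasVanishingMoments n ℓ g) : IsClassicalAtom2 n p ℓ g x₀ σ :=
  ⟨hσ, hsupp, (memLp_two_iff_integrable_sq hg).2 hg2,
    by simpa only [Real.rpow_two, sq_abs] using hnorm, hmom⟩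

theorem watom_scale_mul_L2_bound_le {C V W p q : ℝ} (hC : 0 < C) (hV : 0 < V) (hW : 0 ≤ W)
    (hq : q ≠ 0) :
    C ^ (-(1 / q)) * V ^ (-(1 / p)) * W ^ (1 / p) *
      (V ^ (1 / 2 : ℝ) * C ^ (1 / q) * W ^ (-(1 / q)) * W ^ (1 / q - 1 / p)) ≤
        V ^ (1 / 2 - 1 / p) := by
  rcases hW.eq_or_lt with rfl | hW
  · rw [Real.zero_rpow (x := -(1 / q)) (by simpa using hq), mul_zero, zero_mul, mul_zero]
    positivity
  · refine le_of_eq ?_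
    rw [Real.rpow_neg hC.le, Real.rpow_neg hV.le, Real.rpow_neg hW.le, Real.rpow_sub hW,
      Real.rpow_sub hV]
    field_simp

theorem watom_multiple_of_classical_L2_atom_general (n : ℕ)
    (w : EuclideanSpace ℝ (Fin n) → ℝ) (hw : ∀ x, 0 ≤ w x)
    (p : ℝ)
    -- the critical index `q_w` of `w`:
    (qw : ℝ) (hqw : qw = sInf {t : ℝ | 1 ≤ t ∧ ∃ Ct > (0:ℝ), IsAp n w t Ct})
    (q : ℝ) (hq : q = 2 * (qw + 1))
    (ℓ : ℕ)
    -- the constant `C` in the `A_{q/2}` characterization of `w` (Lemma A):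
    (C : ℝ) (hC : 0 < C)
    (hchar : ∀ g : EuclideanSpace ℝ (Fin n) → ℝ, Measurable g → (∀ x, 0 ≤ g x) →
      ∀ (y₀ : EuclideanSpace ℝ (Fin n)) (r : ℝ), 0 < r →
        (setAvg g (ball y₀ r)) ^ (q / 2) ≤
          C * (∫ x in ball y₀ r, w x)⁻¹ * ∫ x in ball y₀ r, g x ^ (q / 2) * w x) :
    ∀ (f : EuclideanSpace ℝ (Fin n) → ℝ) (x₀ : EuclideanSpace ℝ (Fin n)) (σ : ℝ),
      IsWAtom n w p q ℓ f x₀ σ →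
      IsClassicalAtom2 n p ℓ
        (fun x => C ^ (-(1 / q)) * (volume (ball x₀ σ)).toReal ^ (-(1 / p)) *
          (∫ y in ball x₀ σ, w y) ^ (1 / p) * f x) x₀ σ := by
  rintro f x₀ σ ⟨hσ, hsupp, hfw, hsize, hmom⟩
  have hq0 : 0 < q := by
    have : 0 ≤ qw := hqw ▸ Real.sInf_nonneg fun t ht => zero_le_one.trans ht.1
    linarith
  have hf : AEMeasurable f volume := by simpa using (hmom 0 (by simp)).1.aemeasurable
  obtain ⟨hf2, hL2⟩ :=
    ApCharacterization.integrable_sq_and_integral_sq_rpow_le hchar hq0 hC.le hw hf hfw hσ hsupp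
  have hV : 0 < (volume (ball x₀ σ)).toReal :=
    ENNReal.toReal_pos (measure_ball_pos volume x₀ hσ).ne' measure_ball_lt_top.ne
  have hW : 0 ≤ ∫ y in ball x₀ σ, w y := integral_nonneg hw
  set c := C ^ (-(1 / q)) * (volume (ball x₀ σ)).toReal ^ (-(1 / p)) *
    (∫ y in ball x₀ σ, w y) ^ (1 / p)
  have hc : 0 ≤ c := by positivity
  refine isClassicalAtom2_of_integral_sq_le hσ (fun x hx => by rw [hsupp x hx, mul_zero])
    (hf.const_mul c).aestronglyMeasurable (by simpa only [mul_pow] using hf2.const_mul (c ^ 2))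
    ?_ (HasVanishingMoments.const_mul hmom c)
  calc (∫ x, (c * f x) ^ 2) ^ (1 / 2 : ℝ) = c * (∫ x, f x ^ 2) ^ (1 / 2 : ℝ) := by
        simp_rw [mul_pow]
        rw [integral_const_mul, Real.mul_rpow (sq_nonneg c) (integral_nonneg fun _ => sq_nonneg _),
          ← Real.sqrt_eq_rpow, Real.sqrt_sq hc]
    _ ≤ c * ((volume (ball x₀ σ)).toReal ^ (1 / 2 : ℝ) * C ^ (1 / q) *
          (∫ x in ball x₀ σ, w x) ^ (-(1 / q)) * (∫ y in ball x₀ σ, w y) ^ (1 / q - 1 / p)) := by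
        gcongr
        exact hL2.trans (by gcongr)
    _ ≤ _ := watom_scale_mul_L2_bound_le hC hV hW hq0.ne'

theorem watom_multiple_of_classical_L2_atom (n : ℕ) (hn : 0 < n)
    (w : EuclideanSpace ℝ (Fin n) → ℝ) (hw : ∀ x, 0 ≤ w x)
    (hloc : LocallyIntegrable w volume)
    -- `w ∈ A_∞`:
    (hAinf : ∃ t : ℝ, 1 ≤ t ∧ ∃ Ct > (0:ℝ), IsAp n w t Ct)
    (p : ℝ) (hp0 : 0 < p) (hp1 : p ≤ 1)
    -- the critical index `q_w` of `w`:
    (qw : ℝ) (hqw : qw = sInf {t : ℝ | 1 ≤ t ∧ ∃ Ct > (0:ℝ), IsAp n w t Ct})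
    (q : ℝ) (hq : q = 2 * (qw + 1))
    (s ℓ : ℕ) (hsl : s ≤ ℓ) (hs : ⌊(n : ℝ) * (qw / p - 1)⌋ ≤ (s : ℤ))
    -- the constant `C` in the `A_{q/2}` characterization of `w` (Lemma A):
    (C : ℝ) (hC : 0 < C)
    (hchar : ∀ g : EuclideanSpace ℝ (Fin n) → ℝ, Measurable g → (∀ x, 0 ≤ g x) →
      ∀ (y₀ : EuclideanSpace ℝ (Fin n)) (r : ℝ), 0 < r →
        (setAvg g (ball y₀ r)) ^ (q / 2) ≤
          C * (∫ x in ball y₀ r, w x)⁻¹ * ∫ x in ball y₀ r, g x ^ (q / 2) * w x) :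
    ∀ (f : EuclideanSpace ℝ (Fin n) → ℝ) (x₀ : EuclideanSpace ℝ (Fin n)) (σ : ℝ),
      IsWAtom n w p q ℓ f x₀ σ →
      IsClassicalAtom2 n p ℓ
        (fun x => C ^ (-(1 / q)) * (volume (ball x₀ σ)).toReal ^ (-(1 / p)) *
          (∫ y in ball x₀ σ, w y) ^ (1 / p) * f x) x₀ σ :=
  watom_multiple_of_classical_L2_atom_general n w hw p qw hqw q hq ℓ C hC hchar
end
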